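/- Let X be a proper metric space, ρ : C₀(X) → B(H) a nondegenerate representation, and U1, U2 closed subsets of X that coarsely cover X. Let P_i denote the orthogonal projection of H onto H_{U_i} for i = 1, 2. Then for every T ∈ B(H) that is locally compact and has finite propagation with respect to ρ, there exist operators T1, T2 ∈ B(H), each locally compact and of finite propagation with respect to ρ and satisfying T_i = P_i T_i P_i, such that T1 + T2 − T is a compact operator. -/

import Mathlib

set_option linter.unusedSectionVars false
open scoped ZeroAtInfty BoundedContinuousFunction
open ContinuousLinearMap Filter Metric Topology
open scoped InnerProductSpace

/-- For a representation `ρ : C₀(X) → B(H)` and a subset `Y ⊆ X`, the subspace `H_{I(Y)}`: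
the closure of the linear span of `{ρ(f)v : f ∈ I(Y), v ∈ H}`, where
`I(Y) = {f ∈ C₀(X) : f(y) = 0 for all y ∈ Y}`. -/
noncomputable def HI {X H : Type*} [MetricSpace X]
    [NormedAddCommGroup H] [InnerProductSpace ℂ H] [CompleteSpace H]
    (ρ : C₀(X, ℂ) →⋆ₙₐ[ℂ] (H →L[ℂ] H)) (Y : Set X) : Submodule ℂ H :=
  (Submodule.span ℂ
    {w : H | ∃ f : C₀(X, ℂ), (∀ y ∈ Y, f y = 0) ∧ ∃ v : H, w = ρ f v}).topologicalClosure

instance {X H : Type*} [MetricSpace X]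
    [NormedAddCommGroup H] [InnerProductSpace ℂ H] [CompleteSpace H]
    (ρ : C₀(X, ℂ) →⋆ₙₐ[ℂ] (H →L[ℂ] H)) (Y : Set X) :
    Submodule.HasOrthogonalProjection (HI ρ Y)ᗮ := by
  haveI : CompleteSpace (HI ρ Y) :=
    (Submodule.isClosed_topologicalClosure _).completeSpace_coe
  infer_instance

/-- The orthogonal projection `P_Y` of `H` onto `H_Y = H_{I(Y)}ᗮ`, viewed as an operator
`H → H`. -/
noncomputable def projHY {X H : Type*} [MetricSpace X]
    [NormedAddCommGroup H] [InnerProductSpace ℂ H] [CompleteSpace H]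
    (ρ : C₀(X, ℂ) →⋆ₙₐ[ℂ] (H →L[ℂ] H)) (Y : Set X) : H →L[ℂ] H :=
  ((HI ρ Y)ᗮ).subtypeL ∘L Submodule.orthogonalProjectionOnto (HI ρ Y)ᗮ

/-- A representation `ρ : C₀(X) → B(H)` is nondegenerate if the closed linear span of
`{ρ(f)v : f ∈ C₀(X), v ∈ H}` equals `H`. -/
def Nondegenerate {X H : Type*} [MetricSpace X]
    [NormedAddCommGroup H] [InnerProductSpace ℂ H] [CompleteSpace H]
    (ρ : C₀(X, ℂ) →⋆ₙₐ[ℂ] (H →L[ℂ] H)) : Prop :=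
  (Submodule.span ℂ {w : H | ∃ f : C₀(X, ℂ), ∃ v : H, w = ρ f v}).topologicalClosure = ⊤

/-- An operator `T ∈ B(H)` is locally compact with respect to `ρ` if `ρ(f)T` and `Tρ(f)` are
compact operators for every `f ∈ C₀(X)`. -/
def LocallyCompactOp {X H : Type*} [MetricSpace X]
    [NormedAddCommGroup H] [InnerProductSpace ℂ H] [CompleteSpace H]
    (ρ : C₀(X, ℂ) →⋆ₙₐ[ℂ] (H →L[ℂ] H)) (T : H →L[ℂ] H) : Prop :=
  ∀ f : C₀(X, ℂ), IsCompactOperator ⇑(ρ f ∘L T) ∧ IsCompactOperator ⇑(T ∘L ρ f)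

/-- An operator `T ∈ B(H)` has finite propagation with respect to `ρ` if there exists
`R > 0` such that `ρ(f) T ρ(g) = 0` for all `f, g ∈ C₀(X)` with `d(x, y) > R` for every
`x ∈ supp f` and `y ∈ supp g`. -/
def FinitePropagation {X H : Type*} [MetricSpace X]
    [NormedAddCommGroup H] [InnerProductSpace ℂ H] [CompleteSpace H]
    (ρ : C₀(X, ℂ) →⋆ₙₐ[ℂ] (H →L[ℂ] H)) (T : H →L[ℂ] H) : Prop :=
  ∃ R > (0 : ℝ), ∀ f g : C₀(X, ℂ),
    (∀ x ∈ Function.support ⇑f, ∀ y ∈ Function.support ⇑g, R < dist x y) →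
    ρ f ∘L T ∘L ρ g = 0

/-- Subsets `U1, U2` coarsely cover `X` if for every `R > 0` the set
`{x ∈ X : d(x, X∖U1) ≤ R and d(x, X∖U2) ≤ R}` is metrically bounded. -/
def CoarselyCoversAll {X : Type*} [MetricSpace X] (U1 U2 : Set X) : Prop :=
  ∀ R > (0 : ℝ), Bornology.IsBounded
    {x : X | (∃ y ∈ U1ᶜ, dist x y ≤ R) ∧ (∃ y ∈ U2ᶜ, dist x y ≤ R)}


section RP
variable {X : Type*} [MetricSpace X] [ProperSpace X]
  {H : Type*} [NormedAddCommGroup H] [InnerProductSpace ℂ H] [CompleteSpace H]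

/-- product of a bounded continuous function and a C₀ function -/
noncomputable def bmul (χ : X →ᵇ ℂ) (f : C₀(X, ℂ)) : C₀(X, ℂ) where
  toFun := fun x => χ x * f x
  continuous_toFun := χ.continuous.mul f.continuous
  zero_at_infty' := by
    show Tendsto (fun x => χ x * f x) (cocompact X) (𝓝 0)
    have h : Tendsto ⇑f (cocompact X) (𝓝 0) := zero_at_infty f
    rw [tendsto_zero_iff_norm_tendsto_zero] at h ⊢
    refine squeeze_zero (g := fun x => ‖χ‖ * ‖f x‖) (fun x => norm_nonneg _) (fun x => ?_) ?_
    · rw [norm_mul]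
      exact mul_le_mul_of_nonneg_right (χ.norm_coe_le_norm x) (norm_nonneg _)
    · simpa using h.const_mul ‖χ‖

@[simp] lemma bmul_apply (χ : X →ᵇ ℂ) (f : C₀(X, ℂ)) (x : X) : bmul χ f x = χ x * f x := rfl

lemma norm_bmul_le (χ : X →ᵇ ℂ) (f : C₀(X, ℂ)) : ‖bmul χ f‖ ≤ ‖χ‖ * ‖f‖ := by
  rw [← ZeroAtInftyContinuousMap.norm_toBCF_eq_norm]
  refine (BoundedContinuousFunction.norm_le (by positivity)).mpr fun x => ?_
  show ‖χ x * f x‖ ≤ ‖χ‖ * ‖f‖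
  rw [norm_mul]
  refine mul_le_mul (χ.norm_coe_le_norm x) ?_ (norm_nonneg _) (norm_nonneg _)
  rw [← ZeroAtInftyContinuousMap.norm_toBCF_eq_norm]
  exact f.toBCF.norm_coe_le_norm x

lemma bmul_mul (χ : X →ᵇ ℂ) (f g : C₀(X, ℂ)) : bmul χ f * g = bmul χ (f * g) := by
  ext x
  show χ x * f x * g x = χ x * (f x * g x)
  ring

lemma mul_bmul (χ : X →ᵇ ℂ) (f g : C₀(X, ℂ)) : f * bmul χ g = bmul χ f * g := by
  ext x
  show f x * (χ x * g x) = χ x * f x * g x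
  ring

lemma bmul_one_left (f : C₀(X, ℂ)) : bmul 1 f = f := by
  ext x; show (1 : X →ᵇ ℂ) x * f x = f x; simp

lemma bmul_add_left (χ ψ : X →ᵇ ℂ) (f : C₀(X, ℂ)) :
    bmul (χ + ψ) f = bmul χ f + bmul ψ f := by
  ext x; show (χ + ψ) x * f x = χ x * f x + ψ x * f x
  simp [add_mul]

lemma bmul_sub_right (χ : X →ᵇ ℂ) (f g : C₀(X, ℂ)) :
    bmul χ f - bmul χ g = bmul χ (f - g) := by
  ext x
  show χ x * f x - χ x * g x = χ x * (f x - g x)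
  ring

lemma bmul_c0 (η f : C₀(X, ℂ)) : bmul η.toBCF f = η * f := by
  ext x; rfl

lemma support_bmul_subset (χ : X →ᵇ ℂ) (f : C₀(X, ℂ)) :
    Function.support ⇑(bmul χ f) ⊆ Function.support ⇑f := by
  intro x hx
  simp only [Function.mem_support, bmul_apply] at hx ⊢
  exact fun h => hx (by rw [h, mul_zero])


/-- approximate identity: `1` on the ball of radius `n - 1`, `0` outside radius `n`. -/
noncomputable def apId (x0 : X) (n : ℕ) : C₀(X, ℂ) where
  toFun := fun x => ((max 0 (min 1 ((n : ℝ) - dist x x0)) : ℝ) : ℂ)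
  continuous_toFun := Complex.continuous_ofReal.comp <|
    (continuous_const.max (continuous_const.min (continuous_const.sub (continuous_id.dist continuous_const))))
  zero_at_infty' := by
    show Tendsto _ (cocompact X) (𝓝 0)
    refine Tendsto.congr' ?_ tendsto_const_nhds
    rw [Filter.EventuallyEq, Filter.eventually_iff, Filter.mem_cocompact]
    refine ⟨Metric.closedBall x0 n, isCompact_closedBall x0 n, fun x hx => ?_⟩
    simp only [Set.mem_compl_iff, Metric.mem_closedBall, not_le] at hx
    simp only [Set.mem_setOf_eq]
    have h1 : (n : ℝ) - dist x x0 < 0 := by linarith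
    have : min 1 ((n : ℝ) - dist x x0) ≤ 0 := le_trans (min_le_right _ _) h1.le
    rw [max_eq_left this]
    simp

lemma apId_mem_Icc (x0 : X) (n : ℕ) (x : X) :
    max 0 (min 1 ((n : ℝ) - dist x x0)) ∈ Set.Icc (0:ℝ) 1 :=
  ⟨le_max_left _ _, max_le (by norm_num) (min_le_left _ _)⟩

lemma apId_norm_le (x0 : X) (n : ℕ) : ‖apId x0 n‖ ≤ 1 := by
  rw [← ZeroAtInftyContinuousMap.norm_toBCF_eq_norm]
  refine (BoundedContinuousFunction.norm_le (by norm_num)).mpr fun x => ?_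
  show ‖((max 0 (min 1 ((n : ℝ) - dist x x0)) : ℝ) : ℂ)‖ ≤ 1
  rw [Complex.norm_real, Real.norm_eq_abs, abs_of_nonneg (apId_mem_Icc x0 n x).1]
  exact (apId_mem_Icc x0 n x).2

lemma apId_eq_one (x0 : X) (n : ℕ) (x : X) (h : dist x x0 ≤ (n : ℝ) - 1) :
    apId x0 n x = 1 := by
  show ((max 0 (min 1 ((n : ℝ) - dist x x0)) : ℝ) : ℂ) = 1
  have h1 : (1:ℝ) ≤ (n : ℝ) - dist x x0 := by linarith
  rw [min_eq_left h1, max_eq_right (by norm_num)]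
  norm_num

/-- key approximation property -/
lemma apId_mul_approx (x0 : X) (f : C₀(X, ℂ)) {ε : ℝ} (hε : 0 < ε) :
    ∃ N : ℕ, ∀ n ≥ N, ‖apId x0 n * f - f‖ ≤ ε := by
  have hf : Tendsto ⇑f (cocompact X) (𝓝 0) := zero_at_infty f
  have hmem : {x : X | ‖f x‖ < ε} ∈ cocompact X := by
    have h2 := Metric.tendsto_nhds.mp hf ε hε
    rw [Filter.eventually_iff] at h2
    refine Filter.mem_of_superset h2 ?_
    intro x hx
    simpa [dist_zero_right] using hx
  rw [Filter.mem_cocompact] at hmem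
  obtain ⟨K, hK, hKsub⟩ := hmem
  obtain ⟨r, hr⟩ := hK.isBounded.subset_closedBall x0
  refine ⟨⌈r⌉₊ + 2, fun n hn => ?_⟩
  rw [← ZeroAtInftyContinuousMap.norm_toBCF_eq_norm]
  refine (BoundedContinuousFunction.norm_le hε.le).mpr fun x => ?_
  show ‖apId x0 n x * f x - f x‖ ≤ ε
  rcases le_or_gt (dist x x0) ((n : ℝ) - 1) with hd | hd
  · rw [apId_eq_one x0 n x hd]
    simp [hε.le]
  · have hxK : x ∉ K := by
      intro hxK
      have := hr hxK
      rw [Metric.mem_closedBall] at this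
      have h2 : ((⌈r⌉₊:ℝ) + 2) ≤ (n:ℝ) := by exact_mod_cast hn
      have h3 : r ≤ (⌈r⌉₊:ℝ) := Nat.le_ceil r
      linarith
    have hfx : ‖f x‖ < ε := hKsub hxK
    have : ‖apId x0 n x * f x - f x‖ = ‖apId x0 n x - 1‖ * ‖f x‖ := by
      rw [← norm_mul]; ring_nf
    rw [this]
    have hb : ‖apId x0 n x - 1‖ ≤ 1 := by
      show ‖((max 0 (min 1 ((n : ℝ) - dist x x0)) : ℝ) : ℂ) - 1‖ ≤ 1
      rw [← Complex.ofReal_one, ← Complex.ofReal_sub, Complex.norm_real, Real.norm_eq_abs, abs_le]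
      have h12 := Set.mem_Icc.mp (apId_mem_Icc x0 n x)
      obtain ⟨h1, h2⟩ := h12
      constructor <;> linarith
    calc ‖apId x0 n x - 1‖ * ‖f x‖ ≤ 1 * ‖f x‖ :=
          mul_le_mul_of_nonneg_right hb (norm_nonneg _)
      _ ≤ ε := by rw [one_mul]; exact hfx.le


section Rep
variable (ρ : C₀(X, ℂ) →⋆ₙₐ[ℂ] (H →L[ℂ] H))

lemma rho_apply_rho (f g : C₀(X, ℂ)) (v : H) : ρ f (ρ g v) = ρ (f * g) v := by
  rw [map_mul]; rfl

def genSet : Set H := {w : H | ∃ f : C₀(X, ℂ), ∃ v : H, w = ρ f v}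

lemma dense_genSpan (hρ : Nondegenerate ρ) :
    Dense ((Submodule.span ℂ (genSet ρ)) : Set H) :=
  Submodule.dense_iff_topologicalClosure_eq_top.mpr hρ

lemma tendsto_apId_mul_sub (x0 : X) (f : C₀(X, ℂ)) :
    Tendsto (fun n => ‖apId x0 n * f - f‖) atTop (𝓝 0) := by
  rw [Metric.tendsto_atTop]
  intro ε hε
  obtain ⟨N, hN⟩ := apId_mul_approx x0 f (half_pos hε)
  refine ⟨N, fun n hn => ?_⟩
  rw [Real.dist_eq, sub_zero, abs_of_nonneg (norm_nonneg _)]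
  linarith [hN n hn]

lemma tendsto_seq_rho (x0 : X) (χ : X →ᵇ ℂ) (f : C₀(X, ℂ)) (v : H) :
    Tendsto (fun n => ρ (bmul χ (apId x0 n)) (ρ f v)) atTop (𝓝 (ρ (bmul χ f) v)) := by
  have heq : ∀ n, ρ (bmul χ (apId x0 n)) (ρ f v) = ρ (bmul χ (apId x0 n * f)) v := by
    intro n; rw [rho_apply_rho, bmul_mul]
  simp only [heq]
  rw [tendsto_iff_norm_sub_tendsto_zero]
  refine squeeze_zero (g := fun n => (‖χ‖ * ‖v‖) * ‖apId x0 n * f - f‖)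
    (fun n => norm_nonneg _) (fun n => ?_) ?_
  · have h1 : ρ (bmul χ (apId x0 n * f)) v - ρ (bmul χ f) v
        = ρ (bmul χ (apId x0 n * f - f)) v := by
      rw [← bmul_sub_right, map_sub]; rfl
    rw [h1]
    calc ‖ρ (bmul χ (apId x0 n * f - f)) v‖
        ≤ ‖ρ (bmul χ (apId x0 n * f - f))‖ * ‖v‖ := le_opNorm _ _
      _ ≤ ‖bmul χ (apId x0 n * f - f)‖ * ‖v‖ :=
          mul_le_mul_of_nonneg_right (NonUnitalStarAlgHom.norm_apply_le ρ _) (norm_nonneg _)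
      _ ≤ (‖χ‖ * ‖apId x0 n * f - f‖) * ‖v‖ :=
          mul_le_mul_of_nonneg_right (norm_bmul_le _ _) (norm_nonneg _)
      _ = (‖χ‖ * ‖v‖) * ‖apId x0 n * f - f‖ := by ring
  · simpa using (tendsto_apId_mul_sub x0 f).const_mul (‖χ‖ * ‖v‖)

lemma exists_lim_on_span (x0 : X) (χ : X →ᵇ ℂ) :
    ∀ v ∈ Submodule.span ℂ (genSet ρ), ∃ w, Tendsto (fun n => ρ (bmul χ (apId x0 n)) v) atTop (𝓝 w) := by
  intro v hv
  induction hv using Submodule.span_induction with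
  | mem x hx =>
    obtain ⟨f, u, rfl⟩ := hx
    exact ⟨ρ (bmul χ f) u, tendsto_seq_rho ρ x0 χ f u⟩
  | zero => exact ⟨0, by simp only [map_zero]; exact tendsto_const_nhds⟩
  | add x y hx hy ihx ihy =>
    obtain ⟨w1, h1⟩ := ihx; obtain ⟨w2, h2⟩ := ihy
    exact ⟨w1 + w2, by simpa only [map_add] using h1.add h2⟩
  | smul c x hx ih =>
    obtain ⟨w, h⟩ := ih
    exact ⟨c • w, by simpa only [map_smul] using h.const_smul c⟩

lemma cauchySeq_apply_of_dense {A : ℕ → H →L[ℂ] H} {C : ℝ} (hC : ∀ n, ‖A n‖ ≤ C)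
    {s : Submodule ℂ H} (hs : Dense (s : Set H))
    (h : ∀ v ∈ s, ∃ w, Tendsto (fun n => A n v) atTop (𝓝 w)) (v : H) :
    CauchySeq (fun n => A n v) := by
  rw [Metric.cauchySeq_iff]
  intro ε hε
  have hC0 : 0 ≤ C := le_trans (norm_nonneg _) (hC 0)
  have hpos : 0 < ε / (4 * (C + 1)) := by positivity
  obtain ⟨u, hus, hu⟩ := hs.exists_dist_lt v hpos
  obtain ⟨w, hw⟩ := h u hus
  have hcs : CauchySeq (fun n => A n u) := hw.cauchySeq
  rw [Metric.cauchySeq_iff] at hcs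
  obtain ⟨N, hN⟩ := hcs (ε / 2) (half_pos hε)
  refine ⟨N, fun m hm n hn => ?_⟩
  have key : ∀ k : ℕ, dist (A k v) (A k u) ≤ C * dist v u := by
    intro k
    rw [dist_eq_norm, ← map_sub, dist_eq_norm]
    calc ‖A k (v - u)‖ ≤ ‖A k‖ * ‖v - u‖ := le_opNorm _ _
      _ ≤ C * ‖v - u‖ := mul_le_mul_of_nonneg_right (hC k) (norm_nonneg _)
  have hCd : C * dist v u < ε / 4 := by
    have h1 : C * dist v u ≤ (C + 1) * dist v u :=
      mul_le_mul_of_nonneg_right (by linarith) dist_nonneg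
    have h2 : (C + 1) * dist v u < (C + 1) * (ε / (4 * (C + 1))) :=
      mul_lt_mul_of_pos_left hu (by linarith)
    have h3 : (C + 1) * (ε / (4 * (C + 1))) = ε / 4 := by
      field_simp
    linarith
  calc dist (A m v) (A n v)
      ≤ dist (A m v) (A m u) + dist (A m u) (A n u) + dist (A n u) (A n v) :=
        dist_triangle4 _ _ _ _
    _ < C * dist v u + ε / 2 + C * dist v u := by
        have := key m; have := key n
        have h4 : dist (A n u) (A n v) = dist (A n v) (A n u) := dist_comm _ _
        have h5 := hN m hm n hn
        linarith
    _ < ε := by linarith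

noncomputable def MopFun (x0 : X) (χ : X →ᵇ ℂ) (v : H) : H :=
  limUnder atTop (fun n => ρ (bmul χ (apId x0 n)) v)

variable (x0 : X)

lemma norm_rho_bmul_apId_le (χ : X →ᵇ ℂ) (n : ℕ) : ‖ρ (bmul χ (apId x0 n))‖ ≤ ‖χ‖ := by
  refine le_trans (NonUnitalStarAlgHom.norm_apply_le ρ _) (le_trans (norm_bmul_le _ _) ?_)
  calc ‖χ‖ * ‖apId x0 n‖ ≤ ‖χ‖ * 1 :=
        mul_le_mul_of_nonneg_left (apId_norm_le x0 n) (norm_nonneg _)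
    _ = ‖χ‖ := mul_one _

lemma tendsto_MopFun (hρ : Nondegenerate ρ) (χ : X →ᵇ ℂ) (v : H) :
    Tendsto (fun n => ρ (bmul χ (apId x0 n)) v) atTop (𝓝 (MopFun ρ x0 χ v)) := by
  have hcs := cauchySeq_apply_of_dense (norm_rho_bmul_apId_le ρ x0 χ)
    (dense_genSpan ρ hρ) (exists_lim_on_span ρ x0 χ) v
  obtain ⟨w, hw⟩ := cauchySeq_tendsto_of_complete hcs
  rw [MopFun, hw.limUnder_eq]
  exact hw

/-- the multiplier operator associated to a bounded continuous function -/
noncomputable def Mop (hρ : Nondegenerate ρ) (χ : X →ᵇ ℂ) : H →L[ℂ] H :=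
  LinearMap.mkContinuous
    { toFun := MopFun ρ x0 χ
      map_add' := fun u v => tendsto_nhds_unique (tendsto_MopFun ρ x0 hρ χ (u + v))
        (by simpa only [map_add] using (tendsto_MopFun ρ x0 hρ χ u).add (tendsto_MopFun ρ x0 hρ χ v))
      map_smul' := fun c v => tendsto_nhds_unique (tendsto_MopFun ρ x0 hρ χ (c • v))
        (by simpa only [map_smul, RingHom.id_apply] using (tendsto_MopFun ρ x0 hρ χ v).const_smul c) }
    ‖χ‖ (fun v => le_of_tendsto (tendsto_MopFun ρ x0 hρ χ v).norm
      (Filter.Eventually.of_forall fun n =>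
        le_trans (le_opNorm _ _) (mul_le_mul_of_nonneg_right (norm_rho_bmul_apId_le ρ x0 χ n) (norm_nonneg _))))

lemma Mop_apply_rho (hρ : Nondegenerate ρ) (χ : X →ᵇ ℂ) (f : C₀(X, ℂ)) (v : H) :
    Mop ρ x0 hρ χ (ρ f v) = ρ (bmul χ f) v :=
  tendsto_nhds_unique (tendsto_MopFun ρ x0 hρ χ (ρ f v)) (tendsto_seq_rho ρ x0 χ f v)


lemma Mop_comp_rho (hρ : Nondegenerate ρ) (χ : X →ᵇ ℂ) (f : C₀(X, ℂ)) :
    Mop ρ x0 hρ χ ∘L ρ f = ρ (bmul χ f) := by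
  ext v; exact Mop_apply_rho ρ x0 hρ χ f v

lemma rho_comp_Mop (hρ : Nondegenerate ρ) (χ : X →ᵇ ℂ) (f : C₀(X, ℂ)) :
    ρ f ∘L Mop ρ x0 hρ χ = ρ (bmul χ f) := by
  refine ContinuousLinearMap.ext_on (dense_genSpan ρ hρ) ?_
  rintro w ⟨g, v, rfl⟩
  show ρ f (Mop ρ x0 hρ χ (ρ g v)) = ρ (bmul χ f) (ρ g v)
  rw [Mop_apply_rho, rho_apply_rho, rho_apply_rho, mul_bmul]

lemma Mop_one (hρ : Nondegenerate ρ) : Mop ρ x0 hρ 1 = ContinuousLinearMap.id ℂ H := by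
  refine ContinuousLinearMap.ext_on (dense_genSpan ρ hρ) ?_
  rintro w ⟨g, v, rfl⟩
  show Mop ρ x0 hρ 1 (ρ g v) = ρ g v
  rw [Mop_apply_rho, bmul_one_left]

lemma Mop_add (hρ : Nondegenerate ρ) (χ ψ : X →ᵇ ℂ) :
    Mop ρ x0 hρ (χ + ψ) = Mop ρ x0 hρ χ + Mop ρ x0 hρ ψ := by
  refine ContinuousLinearMap.ext_on (dense_genSpan ρ hρ) ?_
  rintro w ⟨g, v, rfl⟩
  show Mop ρ x0 hρ (χ + ψ) (ρ g v) = Mop ρ x0 hρ χ (ρ g v) + Mop ρ x0 hρ ψ (ρ g v)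
  rw [Mop_apply_rho, Mop_apply_rho, Mop_apply_rho, bmul_add_left, map_add]
  rfl

lemma Mop_c0 (hρ : Nondegenerate ρ) (η : C₀(X, ℂ)) : Mop ρ x0 hρ η.toBCF = ρ η := by
  refine ContinuousLinearMap.ext_on (dense_genSpan ρ hρ) ?_
  rintro w ⟨g, v, rfl⟩
  show Mop ρ x0 hρ η.toBCF (ρ g v) = ρ η (ρ g v)
  rw [Mop_apply_rho, bmul_c0, rho_apply_rho]

lemma inner_zero_on_closure_span {S : Set H} {z : H} (h : ∀ w ∈ S, ⟪w, z⟫_ℂ = 0) :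
    ∀ u ∈ (Submodule.span ℂ S).topologicalClosure, ⟪u, z⟫_ℂ = 0 := by
  have hspan : ∀ u ∈ Submodule.span ℂ S, ⟪u, z⟫_ℂ = 0 := by
    intro u hu
    induction hu using Submodule.span_induction with
    | mem x hx => exact h x hx
    | zero => simp
    | add x y _ _ ihx ihy => rw [inner_add_left, ihx, ihy, add_zero]
    | smul c x _ ih => rw [inner_smul_left, ih, mul_zero]
  intro u hu
  have hmem : u ∈ closure ((Submodule.span ℂ S : Set H)) := by
    rw [← Submodule.topologicalClosure_coe]; exact hu
  have hsub : closure ((Submodule.span ℂ S : Set H)) ⊆ {u : H | ⟪u, z⟫_ℂ = 0} :=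
    closure_minimal hspan (isClosed_eq (continuous_id.inner continuous_const) continuous_const)
  exact hsub hmem

lemma inner_rho_apply (f : C₀(X, ℂ)) (v z : H) : ⟪ρ f v, z⟫_ℂ = ⟪v, ρ (star f) z⟫_ℂ := by
  rw [map_star, ContinuousLinearMap.star_eq_adjoint, ContinuousLinearMap.adjoint_inner_right]

lemma Mop_eq_zero_on_HI (hρ : Nondegenerate ρ) (χ : X →ᵇ ℂ) (Y : Set X)
    (hχ : ∀ x ∈ Yᶜ, χ x = 0) : ∀ u ∈ HI ρ Y, Mop ρ x0 hρ χ u = 0 := by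
  have hker : HI ρ Y ≤ (Mop ρ x0 hρ χ).ker := by
    refine Submodule.topologicalClosure_minimal _ ?_ ?_
    · rw [Submodule.span_le]
      rintro w ⟨f, hf, v, rfl⟩
      rw [SetLike.mem_coe, LinearMap.mem_ker]
      show Mop ρ x0 hρ χ (ρ f v) = 0
      rw [Mop_apply_rho]
      have hz : bmul χ f = 0 := by
        ext x
        show χ x * f x = 0
        by_cases hx : x ∈ Y
        · rw [hf x hx, mul_zero]
        · rw [hχ x hx, zero_mul]
      rw [hz, map_zero]
      rfl
    · exact ContinuousLinearMap.isClosed_ker (Mop ρ x0 hρ χ)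
  intro u hu
  exact hker hu

lemma Mop_mem_HIperp (hρ : Nondegenerate ρ) (χ : X →ᵇ ℂ) (Y : Set X)
    (hχ : ∀ x ∈ Yᶜ, χ x = 0) (u : H) : Mop ρ x0 hρ χ u ∈ (HI ρ Y)ᗮ := by
  have hgen : ∀ w ∈ genSet ρ, Mop ρ x0 hρ χ w ∈ (HI ρ Y)ᗮ := by
    rintro w ⟨g, v, rfl⟩
    rw [Mop_apply_rho, Submodule.mem_orthogonal]
    intro y hy
    refine inner_zero_on_closure_span ?_ y hy
    rintro w' ⟨f, hf, v', rfl⟩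
    rw [inner_rho_apply, rho_apply_rho]
    have hz : star f * bmul χ g = 0 := by
      ext x
      show (star f) x * (χ x * g x) = 0
      by_cases hx : x ∈ Y
      · have : f x = 0 := hf x hx
        show star (f x) * (χ x * g x) = 0
        rw [this, star_zero, zero_mul]
      · rw [hχ x hx, zero_mul, mul_zero]
    rw [hz, map_zero]
    show (⟪v', (0 : H →L[ℂ] H) v⟫_ℂ) = 0
    rw [ContinuousLinearMap.zero_apply, inner_zero_right]
  have hspan : ∀ w ∈ (Submodule.span ℂ (genSet ρ) : Set H), Mop ρ x0 hρ χ w ∈ (HI ρ Y)ᗮ := by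
    intro w hw
    induction hw using Submodule.span_induction with
    | mem x hx => exact hgen x hx
    | zero => rw [map_zero]; exact Submodule.zero_mem _
    | add x y _ _ ihx ihy => rw [map_add]; exact Submodule.add_mem _ ihx ihy
    | smul c x _ ih => rw [map_smul]; exact Submodule.smul_mem _ c ih
  have hclosed : IsClosed {u : H | Mop ρ x0 hρ χ u ∈ (HI ρ Y)ᗮ} :=
    (Submodule.isClosed_orthogonal _).preimage (Mop ρ x0 hρ χ).continuous
  have hcl : closure ((Submodule.span ℂ (genSet ρ) : Set H)) ⊆
      {u : H | Mop ρ x0 hρ χ u ∈ (HI ρ Y)ᗮ} := closure_minimal hspan hclosed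
  have : u ∈ closure ((Submodule.span ℂ (genSet ρ) : Set H)) := by
    rw [(dense_genSpan ρ hρ).closure_eq]; trivial
  exact hcl this

lemma proj_comp_eq (Y : Set X) (A : H →L[ℂ] H) (h : ∀ u, A u ∈ (HI ρ Y)ᗮ) :
    projHY ρ Y ∘L A = A := by
  ext v
  show ((HI ρ Y)ᗮ).subtypeL (Submodule.orthogonalProjectionOnto (HI ρ Y)ᗮ (A v)) = A v
  show (HI ρ Y)ᗮ.starProjection (A v) = A v
  rw [Submodule.starProjection_eq_self_iff]
  exact h v

lemma comp_proj_eq (Y : Set X) (A : H →L[ℂ] H) (h : ∀ u ∈ HI ρ Y, A u = 0) :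
    A ∘L projHY ρ Y = A := by
  ext v
  show A ((HI ρ Y)ᗮ.starProjection v) = A v
  have hsub : v - (HI ρ Y)ᗮ.starProjection v ∈ HI ρ Y := by
    have h1 : v - (HI ρ Y)ᗮ.starProjection v ∈ ((HI ρ Y)ᗮ)ᗮ :=
      Submodule.sub_starProjection_mem_orthogonal v
    haveI : CompleteSpace (HI ρ Y) :=
      (Submodule.isClosed_topologicalClosure _).completeSpace_coe
    rwa [Submodule.orthogonal_orthogonal] at h1
  have h2 := h _ hsub
  rw [map_sub, sub_eq_zero] at h2
  exact h2.symm

lemma Mop_T_Mop_eq_zero (hρ : Nondegenerate ρ) (χ ψ : X →ᵇ ℂ) (T : H →L[ℂ] H) (R : ℝ)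
    (hT : ∀ f g : C₀(X, ℂ),
      (∀ x ∈ Function.support ⇑f, ∀ y ∈ Function.support ⇑g, R < dist x y) →
      ρ f ∘L T ∘L ρ g = 0)
    (hsep : ∀ x y, χ x ≠ 0 → ψ y ≠ 0 → R < dist x y) :
    Mop ρ x0 hρ χ ∘L T ∘L Mop ρ x0 hρ ψ = 0 := by
  refine ContinuousLinearMap.ext_on (dense_genSpan ρ hρ) ?_
  rintro w ⟨g, v, rfl⟩
  show Mop ρ x0 hρ χ (T (Mop ρ x0 hρ ψ (ρ g v))) = (0 : H →L[ℂ] H) (ρ g v)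
  rw [ContinuousLinearMap.zero_apply, Mop_apply_rho]
  set u := Mop ρ x0 hρ χ (T (ρ (bmul ψ g) v)) with hu
  have hgen : ∀ w' ∈ genSet ρ, ⟪w', u⟫_ℂ = 0 := by
    rintro w' ⟨f, v', rfl⟩
    rw [inner_rho_apply]
    have h0 : ρ (star f) (Mop ρ x0 hρ χ (T (ρ (bmul ψ g) v))) =
        (ρ (bmul χ (star f)) ∘L (T ∘L ρ (bmul ψ g))) v := by
      have h1 : ρ (star f) (Mop ρ x0 hρ χ (T (ρ (bmul ψ g) v))) =
          (ρ (star f) ∘L Mop ρ x0 hρ χ) (T (ρ (bmul ψ g) v)) := rfl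
      rw [h1, rho_comp_Mop]
      rfl
    rw [hu, h0]
    have h2 : ρ (bmul χ (star f)) ∘L (T ∘L ρ (bmul ψ g)) = 0 := by
      have := hT (bmul χ (star f)) (bmul ψ g) ?_
      · rw [← ContinuousLinearMap.comp_assoc] at this ⊢
        exact this
      · intro x hx y hy
        refine hsep x y ?_ ?_
        · simp only [Function.mem_support, bmul_apply] at hx
          exact fun h => hx (by rw [h, zero_mul])
        · simp only [Function.mem_support, bmul_apply] at hy
          exact fun h => hy (by rw [h, zero_mul])
    rw [h2]
    show (⟪v', (0 : H →L[ℂ] H) v⟫_ℂ) = 0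
    rw [ContinuousLinearMap.zero_apply, inner_zero_right]
  have hspanzero : ∀ y' ∈ Submodule.span ℂ (genSet ρ), ⟪u, y'⟫_ℂ = 0 := by
    intro y' hy'
    induction hy' using Submodule.span_induction with
    | mem x hx => exact inner_eq_zero_symm.mp (hgen x hx)
    | zero => simp
    | add x y _ _ ihx ihy => rw [inner_add_right, ihx, ihy, add_zero]
    | smul c x _ ih => rw [inner_smul_right, ih, mul_zero]
  refine (dense_genSpan ρ hρ).eq_zero_of_inner_left (𝕜 := ℂ) ?_
  intro y hy
  exact hspanzero y hy


lemma HI_eq_bot (U : Set X) (h : ∀ y : X, y ∈ U) : HI ρ U = ⊥ := by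
  refine le_antisymm ?_ bot_le
  refine Submodule.topologicalClosure_minimal _ ?_ ?_
  · rw [Submodule.span_le]
    rintro w ⟨f, hf, v, rfl⟩
    have hz : f = 0 := by ext x; exact hf x (h x)
    rw [SetLike.mem_coe, hz, map_zero]
    show (0 : H →L[ℂ] H) v ∈ (⊥ : Submodule ℂ H)
    rw [ContinuousLinearMap.zero_apply]
    exact Submodule.zero_mem _
  · have hb : ((⊥ : Submodule ℂ H) : Set H) = {0} := Submodule.bot_coe
    rw [hb]
    exact isClosed_singleton

lemma projHY_eq_id (U : Set X) (h : ∀ y : X, y ∈ U) (v : H) : projHY ρ U v = v := by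
  show (HI ρ U)ᗮ.starProjection v = v
  rw [Submodule.starProjection_eq_self_iff, HI_eq_bot ρ U h, Submodule.bot_orthogonal_eq_top]
  trivial

lemma sandwich_eq (hρ : Nondegenerate ρ) (χ ψ : X →ᵇ ℂ) (T : H →L[ℂ] H) (f g : C₀(X, ℂ)) :
    ρ f ∘L (Mop ρ x0 hρ χ ∘L (T ∘L Mop ρ x0 hρ ψ)) ∘L ρ g
      = ρ (bmul χ f) ∘L T ∘L ρ (bmul ψ g) := by
  ext v
  simp only [ContinuousLinearMap.comp_apply]
  rw [Mop_apply_rho]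
  have h1 : ρ f (Mop ρ x0 hρ χ (T (ρ (bmul ψ g) v))) =
      (ρ f ∘L Mop ρ x0 hρ χ) (T (ρ (bmul ψ g) v)) := rfl
  rw [h1, rho_comp_Mop]

end Rep
end RP

set_option maxHeartbeats 1000000 in
/-- Let `X` be a proper metric space, `ρ : C₀(X) → B(H)` a nondegenerate
representation, and `U1, U2` closed subsets of `X` that coarsely cover `X`. Let `P_i` denote
the orthogonal projection of `H` onto `H_{U_i}` for `i = 1, 2`. Then for every `T ∈ B(H)` that
is locally compact and has finite propagation with respect to `ρ`, there exist operators
`T1, T2 ∈ B(H)`, each locally compact and of finite propagation with respect to `ρ` and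
satisfying `T_i = P_i T_i P_i`, such that `T1 + T2 − T` is a compact operator. -/
theorem partition_of_operator_along_coarse_cover
    (X : Type*) [MetricSpace X] [ProperSpace X]
    (H : Type*) [NormedAddCommGroup H] [InnerProductSpace ℂ H] [CompleteSpace H]
    (ρ : C₀(X, ℂ) →⋆ₙₐ[ℂ] (H →L[ℂ] H)) (hρ : Nondegenerate ρ)
    (U1 U2 : Set X) (hU1 : IsClosed U1) (hU2 : IsClosed U2)
    (hcover : CoarselyCoversAll U1 U2)
    (T : H →L[ℂ] H) (hlc : LocallyCompactOp ρ T) (hfp : FinitePropagation ρ T) :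
    ∃ T1 T2 : H →L[ℂ] H,
      LocallyCompactOp ρ T1 ∧ FinitePropagation ρ T1 ∧
        T1 = projHY ρ U1 ∘L T1 ∘L projHY ρ U1 ∧
      LocallyCompactOp ρ T2 ∧ FinitePropagation ρ T2 ∧
        T2 = projHY ρ U2 ∘L T2 ∘L projHY ρ U2 ∧
      IsCompactOperator ⇑(T1 + T2 - T) := by
  obtain ⟨R, hR, hT⟩ := hfp
  have hlc0 : LocallyCompactOp ρ 0 := by
    intro f
    constructor
    · rw [ContinuousLinearMap.comp_zero]
      exact isCompactOperator_zero
    · rw [ContinuousLinearMap.zero_comp]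
      exact isCompactOperator_zero
  have hfp0 : FinitePropagation ρ 0 := ⟨1, one_pos, fun f g _ => by
    rw [ContinuousLinearMap.zero_comp, ContinuousLinearMap.comp_zero]⟩
  by_cases h1 : U1ᶜ = ∅
  · have h1' : ∀ y : X, y ∈ U1 := by
      intro y
      by_contra hy
      exact Set.eq_empty_iff_forall_notMem.mp h1 y hy
    refine ⟨T, 0, hlc, ⟨R, hR, hT⟩, ?_, hlc0, hfp0, ?_, ?_⟩
    · ext v
      show T v = projHY ρ U1 (T (projHY ρ U1 v))
      rw [projHY_eq_id ρ U1 h1', projHY_eq_id ρ U1 h1']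
    · ext v; simp
    · have he : T + 0 - T = (0 : H →L[ℂ] H) := by simp
      rw [he]
      exact isCompactOperator_zero
  by_cases h2 : U2ᶜ = ∅
  · have h2' : ∀ y : X, y ∈ U2 := by
      intro y
      by_contra hy
      exact Set.eq_empty_iff_forall_notMem.mp h2 y hy
    refine ⟨0, T, hlc0, hfp0, ?_, hlc, ⟨R, hR, hT⟩, ?_, ?_⟩
    · ext v; simp
    · ext v
      show T v = projHY ρ U2 (T (projHY ρ U2 v))
      rw [projHY_eq_id ρ U2 h2', projHY_eq_id ρ U2 h2']
    · have he : 0 + T - T = (0 : H →L[ℂ] H) := by simp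
      rw [he]
      exact isCompactOperator_zero
  -- main case
  have hne1 : U1ᶜ.Nonempty := Set.nonempty_iff_ne_empty.mpr h1
  have hne2 : U2ᶜ.Nonempty := Set.nonempty_iff_ne_empty.mpr h2
  obtain ⟨x0, -⟩ := hne1
  have hne1 : U1ᶜ.Nonempty := Set.nonempty_iff_ne_empty.mpr h1
  set d1 : X → ℝ := fun x => Metric.infDist x U1ᶜ with hd1
  set d2 : X → ℝ := fun x => Metric.infDist x U2ᶜ with hd2
  set a1 : X → ℝ := fun x => max 0 (d1 x - 3 * R) with ha1
  set a2 : X → ℝ := fun x => max 0 (d2 x - 3 * R) with ha2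
  have ha1nn : ∀ x, 0 ≤ a1 x := fun x => le_max_left _ _
  have ha2nn : ∀ x, 0 ≤ a2 x := fun x => le_max_left _ _
  -- the bad set is bounded
  have hBsub : {x : X | a1 x = 0 ∧ a2 x = 0} ⊆
      {x : X | (∃ y ∈ U1ᶜ, dist x y ≤ 3 * R + 1) ∧ (∃ y ∈ U2ᶜ, dist x y ≤ 3 * R + 1)} := by
    rintro x ⟨hx1, hx2⟩
    constructor
    · have hle : d1 x ≤ 3 * R := by
        by_contra hlt
        push_neg at hlt
        have hpos : (0:ℝ) < max 0 (d1 x - 3 * R) := lt_max_iff.mpr (Or.inr (by linarith))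
        exact hpos.ne' hx1
      have hlt : Metric.infDist x U1ᶜ < 3 * R + 1 := by
        rw [hd1] at hle; simp only at hle; linarith
      obtain ⟨y, hy, hdy⟩ := (Metric.infDist_lt_iff hne1).mp hlt
      exact ⟨y, hy, hdy.le⟩
    · have hle : d2 x ≤ 3 * R := by
        by_contra hlt
        push_neg at hlt
        have hpos : (0:ℝ) < max 0 (d2 x - 3 * R) := lt_max_iff.mpr (Or.inr (by linarith))
        exact hpos.ne' hx2
      have hlt : Metric.infDist x U2ᶜ < 3 * R + 1 := by
        rw [hd2] at hle; simp only at hle; linarith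
      obtain ⟨y, hy, hdy⟩ := (Metric.infDist_lt_iff hne2).mp hlt
      exact ⟨y, hy, hdy.le⟩
  have hBbd := (hcover (3 * R + 1) (by linarith)).subset hBsub
  obtain ⟨r0, hr0⟩ := hBbd.subset_closedBall x0
  set b : X → ℝ := fun x => max 0 (r0 + 1 - dist x x0) with hb
  have hbnn : ∀ x, 0 ≤ b x := fun x => le_max_left _ _
  set den : X → ℝ := fun x => a1 x + a2 x + b x with hden
  have hdenpos : ∀ x, 0 < den x := by
    intro x
    rcases (ha1nn x).lt_or_eq with hlt | heq
    · have := ha2nn x; have := hbnn x; simp only [hden]; linarith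
    rcases (ha2nn x).lt_or_eq with hlt2 | heq2
    · have := ha1nn x; have := hbnn x; simp only [hden]; linarith
    have hxB : x ∈ {x : X | a1 x = 0 ∧ a2 x = 0} := ⟨heq.symm, heq2.symm⟩
    have hxball := hr0 hxB
    rw [Metric.mem_closedBall] at hxball
    have hbx : 1 ≤ b x := by
      have : r0 + 1 - dist x x0 ≥ 1 := by linarith
      calc (1:ℝ) ≤ r0 + 1 - dist x x0 := this
        _ ≤ b x := le_max_right _ _
    simp only [hden]
    have := ha1nn x; have := ha2nn x
    linarith
  -- continuity facts
  have hcd1 : Continuous d1 := Metric.continuous_infDist_pt _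
  have hcd2 : Continuous d2 := Metric.continuous_infDist_pt _
  have hca1 : Continuous a1 := continuous_const.max (hcd1.sub continuous_const)
  have hca2 : Continuous a2 := continuous_const.max (hcd2.sub continuous_const)
  have hcb : Continuous b := continuous_const.max (continuous_const.sub (continuous_id.dist continuous_const))
  have hcden : Continuous den := (hca1.add hca2).add hcb
  -- the cutoff functions
  set χ1 : X →ᵇ ℂ := BoundedContinuousFunction.ofNormedAddCommGroup
    (fun x => ((a1 x / den x : ℝ) : ℂ))
    (Complex.continuous_ofReal.comp (hca1.div hcden fun x => (hdenpos x).ne')) 1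
    (fun x => by
      rw [Complex.norm_real, Real.norm_eq_abs, abs_of_nonneg (div_nonneg (ha1nn x) (hdenpos x).le),
        div_le_one (hdenpos x)]
      have := ha2nn x; have := hbnn x
      simp only [hden]; linarith) with hχ1def
  set χ2 : X →ᵇ ℂ := BoundedContinuousFunction.ofNormedAddCommGroup
    (fun x => ((a2 x / den x : ℝ) : ℂ))
    (Complex.continuous_ofReal.comp (hca2.div hcden fun x => (hdenpos x).ne')) 1
    (fun x => by
      rw [Complex.norm_real, Real.norm_eq_abs, abs_of_nonneg (div_nonneg (ha2nn x) (hdenpos x).le),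
        div_le_one (hdenpos x)]
      have := ha1nn x; have := hbnn x
      simp only [hden]; linarith) with hχ2def
  set θ1 : X →ᵇ ℂ := BoundedContinuousFunction.ofNormedAddCommGroup
    (fun y => ((min 1 (d1 y / (2 * R)) : ℝ) : ℂ))
    (Complex.continuous_ofReal.comp (continuous_const.min (hcd1.div_const _))) 1
    (fun y => by
      have h0 : (0:ℝ) ≤ min 1 (d1 y / (2 * R)) :=
        le_min (by norm_num) (div_nonneg Metric.infDist_nonneg (by linarith))
      rw [Complex.norm_real, Real.norm_eq_abs, abs_of_nonneg h0]
      exact min_le_left _ _) with hθ1def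
  set θ2 : X →ᵇ ℂ := BoundedContinuousFunction.ofNormedAddCommGroup
    (fun y => ((min 1 (d2 y / (2 * R)) : ℝ) : ℂ))
    (Complex.continuous_ofReal.comp (continuous_const.min (hcd2.div_const _))) 1
    (fun y => by
      have h0 : (0:ℝ) ≤ min 1 (d2 y / (2 * R)) :=
        le_min (by norm_num) (div_nonneg Metric.infDist_nonneg (by linarith))
      rw [Complex.norm_real, Real.norm_eq_abs, abs_of_nonneg h0]
      exact min_le_left _ _) with hθ2def
  -- the compactly supported error function
  set η0 : C₀(X, ℂ) := ⟨⟨fun x => (((a1 x + a2 x) / den x - 1 : ℝ) : ℂ),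
      Complex.continuous_ofReal.comp
        (((hca1.add hca2).div hcden fun x => (hdenpos x).ne').sub continuous_const)⟩, by
    show Tendsto _ (cocompact X) (𝓝 0)
    refine Tendsto.congr' ?_ tendsto_const_nhds
    rw [Filter.EventuallyEq, Filter.eventually_iff, Filter.mem_cocompact]
    refine ⟨Metric.closedBall x0 (r0 + 1), isCompact_closedBall _ _, fun x hx => ?_⟩
    simp only [Set.mem_compl_iff, Metric.mem_closedBall, not_le] at hx
    simp only [Set.mem_setOf_eq]
    have hbx : b x = 0 := max_eq_left (by linarith)
    have hdx : den x = a1 x + a2 x := by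
      simp only [hden]
      rw [hbx, add_zero]
    have hne0 : a1 x + a2 x ≠ 0 := by rw [← hdx]; exact (hdenpos x).ne'
    have hq : (a1 x + a2 x) / den x = 1 := by
      rw [hdx]
      exact div_self hne0
    show (0 : ℂ) = (((a1 x + a2 x) / den x - 1 : ℝ) : ℂ)
    rw [hq]
    norm_num⟩ with hη0def
  -- pointwise facts
  have hχ1U : ∀ x ∈ U1ᶜ, χ1 x = 0 := by
    intro x hx
    have hd0 : d1 x = 0 := Metric.infDist_zero_of_mem hx
    have ha0 : a1 x = 0 := max_eq_left (by rw [hd0]; linarith)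
    show ((a1 x / den x : ℝ) : ℂ) = 0
    rw [ha0, zero_div, Complex.ofReal_zero]
  have hχ2U : ∀ x ∈ U2ᶜ, χ2 x = 0 := by
    intro x hx
    have hd0 : d2 x = 0 := Metric.infDist_zero_of_mem hx
    have ha0 : a2 x = 0 := max_eq_left (by rw [hd0]; linarith)
    show ((a2 x / den x : ℝ) : ℂ) = 0
    rw [ha0, zero_div, Complex.ofReal_zero]
  have hθ1U : ∀ x ∈ U1ᶜ, θ1 x = 0 := by
    intro x hx
    have hd0 : d1 x = 0 := Metric.infDist_zero_of_mem hx
    show ((min 1 (d1 x / (2 * R)) : ℝ) : ℂ) = 0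
    rw [hd0, zero_div, min_eq_right (by norm_num : (0:ℝ) ≤ 1), Complex.ofReal_zero]
  have hθ2U : ∀ x ∈ U2ᶜ, θ2 x = 0 := by
    intro x hx
    have hd0 : d2 x = 0 := Metric.infDist_zero_of_mem hx
    show ((min 1 (d2 x / (2 * R)) : ℝ) : ℂ) = 0
    rw [hd0, zero_div, min_eq_right (by norm_num : (0:ℝ) ≤ 1), Complex.ofReal_zero]
  have hsep1 : ∀ x y : X, χ1 x ≠ 0 → (1 - θ1) y ≠ 0 → R < dist x y := by
    intro x y hx hy
    have h3R : 3 * R < d1 x := by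
      by_contra hc
      push_neg at hc
      have ha0 : a1 x = 0 := max_eq_left (by linarith)
      exact hx (by show ((a1 x / den x : ℝ) : ℂ) = 0; rw [ha0, zero_div, Complex.ofReal_zero])
    have h2R : d1 y < 2 * R := by
      by_contra hc
      push_neg at hc
      apply hy
      rw [BoundedContinuousFunction.sub_apply]
      have hone : θ1 y = 1 := by
        show ((min 1 (d1 y / (2 * R)) : ℝ) : ℂ) = 1
        rw [min_eq_left ((one_le_div (by linarith)).mpr hc), Complex.ofReal_one]
      rw [hone]
      simp
    have hlip : d1 x ≤ d1 y + dist x y := Metric.infDist_le_infDist_add_dist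
    linarith
  have hsep2 : ∀ x y : X, χ2 x ≠ 0 → (1 - θ2) y ≠ 0 → R < dist x y := by
    intro x y hx hy
    have h3R : 3 * R < d2 x := by
      by_contra hc
      push_neg at hc
      have ha0 : a2 x = 0 := max_eq_left (by linarith)
      exact hx (by show ((a2 x / den x : ℝ) : ℂ) = 0; rw [ha0, zero_div, Complex.ofReal_zero])
    have h2R : d2 y < 2 * R := by
      by_contra hc
      push_neg at hc
      apply hy
      rw [BoundedContinuousFunction.sub_apply]
      have hone : θ2 y = 1 := by
        show ((min 1 (d2 y / (2 * R)) : ℝ) : ℂ) = 1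
        rw [min_eq_left ((one_le_div (by linarith)).mpr hc), Complex.ofReal_one]
      rw [hone]
      simp
    have hlip : d2 x ≤ d2 y + dist x y := Metric.infDist_le_infDist_add_dist
    linarith
  -- the operators
  refine ⟨Mop ρ x0 hρ χ1 ∘L (T ∘L Mop ρ x0 hρ θ1), Mop ρ x0 hρ χ2 ∘L (T ∘L Mop ρ x0 hρ θ2),
    ?_, ?_, ?_, ?_, ?_, ?_, ?_⟩
  · -- locally compact T1
    intro f
    constructor
    · have he : ρ f ∘L (Mop ρ x0 hρ χ1 ∘L (T ∘L Mop ρ x0 hρ θ1))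
          = (ρ (bmul χ1 f) ∘L T) ∘L Mop ρ x0 hρ θ1 := by
        ext v
        simp only [ContinuousLinearMap.comp_apply]
        have h1 : ρ f (Mop ρ x0 hρ χ1 (T (Mop ρ x0 hρ θ1 v)))
            = (ρ f ∘L Mop ρ x0 hρ χ1) (T (Mop ρ x0 hρ θ1 v)) := rfl
        rw [h1, rho_comp_Mop]
      rw [he, ContinuousLinearMap.coe_comp']
      exact ((hlc (bmul χ1 f)).1).comp_clm (Mop ρ x0 hρ θ1)
    · have he : (Mop ρ x0 hρ χ1 ∘L (T ∘L Mop ρ x0 hρ θ1)) ∘L ρ f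
          = Mop ρ x0 hρ χ1 ∘L (T ∘L ρ (bmul θ1 f)) := by
        ext v
        simp only [ContinuousLinearMap.comp_apply]
        rw [Mop_apply_rho]
      rw [he, ContinuousLinearMap.coe_comp']
      exact ((hlc (bmul θ1 f)).2).continuous_comp (Mop ρ x0 hρ χ1).continuous
  · -- finite propagation T1
    refine ⟨R, hR, fun f g hfg => ?_⟩
    rw [sandwich_eq ρ x0 hρ χ1 θ1 T f g]
    exact hT _ _ (fun x hx y hy =>
      hfg x (support_bmul_subset _ _ hx) y (support_bmul_subset _ _ hy))
  · -- T1 = P1 T1 P1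
    have hA := proj_comp_eq ρ U1 (Mop ρ x0 hρ χ1 ∘L (T ∘L Mop ρ x0 hρ θ1))
      (fun u => Mop_mem_HIperp ρ x0 hρ χ1 U1 hχ1U ((T ∘L Mop ρ x0 hρ θ1) u))
    have hB := comp_proj_eq ρ U1 (Mop ρ x0 hρ χ1 ∘L (T ∘L Mop ρ x0 hρ θ1)) (fun u hu => by
      have hz := Mop_eq_zero_on_HI ρ x0 hρ θ1 U1 hθ1U u hu
      show Mop ρ x0 hρ χ1 (T (Mop ρ x0 hρ θ1 u)) = 0
      rw [hz, map_zero, map_zero])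
    rw [hB, hA]
  · -- locally compact T2
    intro f
    constructor
    · have he : ρ f ∘L (Mop ρ x0 hρ χ2 ∘L (T ∘L Mop ρ x0 hρ θ2))
          = (ρ (bmul χ2 f) ∘L T) ∘L Mop ρ x0 hρ θ2 := by
        ext v
        simp only [ContinuousLinearMap.comp_apply]
        have h1 : ρ f (Mop ρ x0 hρ χ2 (T (Mop ρ x0 hρ θ2 v)))
            = (ρ f ∘L Mop ρ x0 hρ χ2) (T (Mop ρ x0 hρ θ2 v)) := rfl
        rw [h1, rho_comp_Mop]
      rw [he, ContinuousLinearMap.coe_comp']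
      exact ((hlc (bmul χ2 f)).1).comp_clm (Mop ρ x0 hρ θ2)
    · have he : (Mop ρ x0 hρ χ2 ∘L (T ∘L Mop ρ x0 hρ θ2)) ∘L ρ f
          = Mop ρ x0 hρ χ2 ∘L (T ∘L ρ (bmul θ2 f)) := by
        ext v
        simp only [ContinuousLinearMap.comp_apply]
        rw [Mop_apply_rho]
      rw [he, ContinuousLinearMap.coe_comp']
      exact ((hlc (bmul θ2 f)).2).continuous_comp (Mop ρ x0 hρ χ2).continuous
  · -- finite propagation T2
    refine ⟨R, hR, fun f g hfg => ?_⟩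
    rw [sandwich_eq ρ x0 hρ χ2 θ2 T f g]
    exact hT _ _ (fun x hx y hy =>
      hfg x (support_bmul_subset _ _ hx) y (support_bmul_subset _ _ hy))
  · -- T2 = P2 T2 P2
    have hA := proj_comp_eq ρ U2 (Mop ρ x0 hρ χ2 ∘L (T ∘L Mop ρ x0 hρ θ2))
      (fun u => Mop_mem_HIperp ρ x0 hρ χ2 U2 hχ2U ((T ∘L Mop ρ x0 hρ θ2) u))
    have hB := comp_proj_eq ρ U2 (Mop ρ x0 hρ χ2 ∘L (T ∘L Mop ρ x0 hρ θ2)) (fun u hu => by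
      have hz := Mop_eq_zero_on_HI ρ x0 hρ θ2 U2 hθ2U u hu
      show Mop ρ x0 hρ χ2 (T (Mop ρ x0 hρ θ2 u)) = 0
      rw [hz, map_zero, map_zero])
    rw [hB, hA]
  · -- compact remainder
    have hid1 : Mop ρ x0 hρ θ1 + Mop ρ x0 hρ (1 - θ1) = ContinuousLinearMap.id ℂ H := by
      rw [← Mop_add]
      have hone : θ1 + (1 - θ1) = 1 := add_sub_cancel _ _
      rw [hone, Mop_one]
    have hid2 : Mop ρ x0 hρ θ2 + Mop ρ x0 hρ (1 - θ2) = ContinuousLinearMap.id ℂ H := by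
      rw [← Mop_add]
      have hone : θ2 + (1 - θ2) = 1 := add_sub_cancel _ _
      rw [hone, Mop_one]
    have key1 : Mop ρ x0 hρ χ1 ∘L T ∘L Mop ρ x0 hρ (1 - θ1) = 0 :=
      Mop_T_Mop_eq_zero ρ x0 hρ χ1 (1 - θ1) T R hT hsep1
    have key2 : Mop ρ x0 hρ χ2 ∘L T ∘L Mop ρ x0 hρ (1 - θ2) = 0 :=
      Mop_T_Mop_eq_zero ρ x0 hρ χ2 (1 - θ2) T R hT hsep2
    have hT1 : Mop ρ x0 hρ χ1 ∘L (T ∘L Mop ρ x0 hρ θ1) = Mop ρ x0 hρ χ1 ∘L T := by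
      have e1 : Mop ρ x0 hρ χ1 ∘L (T ∘L Mop ρ x0 hρ θ1)
          + Mop ρ x0 hρ χ1 ∘L (T ∘L Mop ρ x0 hρ (1 - θ1)) = Mop ρ x0 hρ χ1 ∘L T := by
        rw [← ContinuousLinearMap.comp_add, ← ContinuousLinearMap.comp_add, hid1,
          ContinuousLinearMap.comp_id]
      rw [key1, add_zero] at e1
      exact e1
    have hT2 : Mop ρ x0 hρ χ2 ∘L (T ∘L Mop ρ x0 hρ θ2) = Mop ρ x0 hρ χ2 ∘L T := by
      have e2 : Mop ρ x0 hρ χ2 ∘L (T ∘L Mop ρ x0 hρ θ2)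
          + Mop ρ x0 hρ χ2 ∘L (T ∘L Mop ρ x0 hρ (1 - θ2)) = Mop ρ x0 hρ χ2 ∘L T := by
        rw [← ContinuousLinearMap.comp_add, ← ContinuousLinearMap.comp_add, hid2,
          ContinuousLinearMap.comp_id]
      rw [key2, add_zero] at e2
      exact e2
    have hsum : Mop ρ x0 hρ χ1 + Mop ρ x0 hρ χ2 = ρ η0 + ContinuousLinearMap.id ℂ H := by
      rw [← Mop_add]
      have hfun : χ1 + χ2 = η0.toBCF + 1 := by
        ext x
        show ((a1 x / den x : ℝ) : ℂ) + ((a2 x / den x : ℝ) : ℂ)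
          = (((a1 x + a2 x) / den x - 1 : ℝ) : ℂ) + 1
        push_cast
        rw [← add_div]
        ring
      rw [hfun, Mop_add, Mop_c0, Mop_one]
    have hfinal : Mop ρ x0 hρ χ1 ∘L (T ∘L Mop ρ x0 hρ θ1)
        + Mop ρ x0 hρ χ2 ∘L (T ∘L Mop ρ x0 hρ θ2) - T = ρ η0 ∘L T := by
      rw [hT1, hT2, ← ContinuousLinearMap.add_comp, hsum, ContinuousLinearMap.add_comp,
        ContinuousLinearMap.id_comp, add_sub_cancel_right]
    rw [hfinal]
    exact (hlc η0).1
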